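/- Let Q be a finite simple graph with q vertices and C a simple graph. Then there exists a graph embedding of Q into C (an injective vertex map that both preserves and reflects adjacency, i.e., an isomorphism of Q onto an induced subgraph of C) if and only if the modular product of Q and C contains a clique of size q. -/

import Mathlib

open SimpleGraph

/-- The modular product of two simple graphs `G` and `H`: vertices are pairs `(u, v)`,
and `(u, v)` is adjacent to `(u', v')` exactly when `u ≠ u'`, `v ≠ v'`, and
`u` is adjacent to `u'` in `G` if and only if `v` is adjacent to `v'` in `H`. -/
def modularProduct {V W : Type*} (G : SimpleGraph V) (H : SimpleGraph W) :
    SimpleGraph (V × W) where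
  Adj p q := p.1 ≠ q.1 ∧ p.2 ≠ q.2 ∧ (G.Adj p.1 q.1 ↔ H.Adj p.2 q.2)
  symm := by
    constructor
    rintro p q ⟨h1, h2, h3⟩
    exact ⟨h1.symm, h2.symm, by rw [G.adj_comm, H.adj_comm]; exact h3⟩
  loopless := by constructor; rintro p ⟨h1, -, -⟩; exact h1 rfl

/-! A clique of the modular product is the graph of a partial induced embedding `G ⇀ H`;
it is the graph of a total one exactly when its first projection covers `V(G)`, which for
finite `G` is forced by the clique having `|V(G)|` elements, since the first projection
is injective on it. -/

section

variable {V W : Type*} {G : SimpleGraph V} {H : SimpleGraph W}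

theorem modularProduct_adj_of_isClique_of_fst_ne {s : Set (V × W)}
    (hs : (modularProduct G H).IsClique s) {p p' : V × W} (hp : p ∈ s) (hp' : p' ∈ s)
    (hne : p.1 ≠ p'.1) : (modularProduct G H).Adj p p' :=
  hs hp hp' fun h => hne (congrArg Prod.fst h)

theorem injOn_fst_of_isClique_modularProduct {s : Set (V × W)}
    (hs : (modularProduct G H).IsClique s) : Set.InjOn Prod.fst s := by
  intro p hp p' hp' h
  by_contra hne
  exact (hs hp hp' hne).1 h

theorem nonempty_embedding_of_isClique_modularProduct {s : Set (V × W)}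
    (hs : (modularProduct G H).IsClique s) (hcover : ∀ v, ∃ p ∈ s, p.1 = v) :
    Nonempty (G ↪g H) := by
  choose g hgs hg_fst using hcover
  have hadj {v v' : V} (hne : v ≠ v') : (modularProduct G H).Adj (g v) (g v') :=
    modularProduct_adj_of_isClique_of_fst_ne hs (hgs v) (hgs v') (by rwa [hg_fst, hg_fst])
  refine ⟨⟨⟨fun v => (g v).2, fun v v' h => ?_⟩, fun {v v'} => ?_⟩⟩
  · by_contra hne
    exact (hadj hne).2.1 h
  · rcases eq_or_ne v v' with rfl | hne
    · simp
    · have hiff := (hadj hne).2.2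
      rw [hg_fst, hg_fst] at hiff
      exact hiff.symm

theorem exists_fst_eq_of_isNClique_modularProduct [Fintype V] {K : Finset (V × W)}
    (hK : (modularProduct G H).IsNClique (Fintype.card V) K) (v : V) : ∃ p ∈ K, p.1 = v := by
  classical
  have himage : K.image Prod.fst = Finset.univ := by
    apply Finset.eq_univ_of_card
    rw [Finset.card_image_of_injOn (injOn_fst_of_isClique_modularProduct hK.isClique),
      hK.card_eq]
  have hv : v ∈ K.image Prod.fst := himage ▸ Finset.mem_univ v
  simpa using hv

theorem SimpleGraph.Embedding.isClique_modularProduct_range (f : G ↪g H) :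
    (modularProduct G H).IsClique (Set.range fun v => (v, f v)) := by
  rintro _ ⟨v, rfl⟩ _ ⟨v', rfl⟩ hne
  have hv : v ≠ v' := fun h => hne (h ▸ rfl)
  exact ⟨hv, f.injective.ne hv, f.map_adj_iff.symm⟩

theorem SimpleGraph.Embedding.isNClique_modularProduct_image [Fintype V] [DecidableEq V]
    [DecidableEq W] (f : G ↪g H) :
    (modularProduct G H).IsNClique (Fintype.card V) (Finset.univ.image fun v => (v, f v)) where
  isClique := by simpa using f.isClique_modularProduct_range
  card_eq := Finset.card_image_of_injective _ fun _ _ h => (Prod.mk.inj h).1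

end

/-- A finite query graph `Q` with `q` vertices embeds into a corpus graph `C` (as an induced
subgraph) iff the modular product of `Q` and `C` contains a clique of size `q`. -/
theorem embedding_iff_modularProduct_clique {V W : Type*} [Fintype V]
    (Q : SimpleGraph V) (C : SimpleGraph W) (q : ℕ) (hq : Fintype.card V = q) :
    Nonempty (Q ↪g C) ↔ ∃ K : Finset (V × W), (modularProduct Q C).IsNClique q K := by
  classical
  subst hq
  constructor
  · rintro ⟨f⟩
    exact ⟨_, f.isNClique_modularProduct_image⟩
  · rintro ⟨K, hK⟩
    exact nonempty_embedding_of_isClique_modularProduct hK.isClique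
      (exists_fst_eq_of_isNClique_modularProduct hK)
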